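/- arXiv:1202.2471 — 2 statements merged into one kernel-verified Lean document; each statement's English description precedes it below -/
import Mathlib

section
/- For 0 < p ≤ 1, λ > 0 and μ ≥ 0, there is a constant C (depending only on λ, μ, p) such that for all t ≥ 0, ∫₀ᵗ e^{-λ(t^p - s^p)} (1+s)^{-μ} ds ≤ C (1+t)^{1-p} (1+t)^{-μ}. -/
/-!
Split the integral at `t / 2`. On `[0, t / 2]` we have `t ^ p - s ^ p ≥ (1 - 2 ^ (-p)) t ^ p`,
so that part is bounded by `t` times a stretched exponential `exp (-c t ^ p)`, which beats
every power of `1 + t`. On `[t / 2, t]` the weight `(1 + s) ^ (-μ)` is comparable to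
`(1 + t) ^ (-μ)`, and since `1 ≤ t ^ (1 - p) s ^ (p - 1)` there, the exponential is bounded by
`t ^ (1 - p) / (λ p)` times its own derivative `λ p s ^ (p - 1) exp (-λ (t ^ p - s ^ p))`,
whose integral is at most `1`.
-/

open Real MeasureTheory

lemma rpow_le_mul_exp {x b c : ℝ} (hx : 0 ≤ x) (hb : 0 < b) (hc : 0 < c) :
    x ^ b ≤ (b / c) ^ b * exp (c * x - b) := by
  -- `y ≤ exp (y - 1)` at `y = c x / b`, raised to the power `b`
  have key : c / b * x ≤ exp (c / b * x - 1) := by linarith [add_one_le_exp (c / b * x - 1)]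
  have hpow := rpow_le_rpow (by positivity) key hb.le
  rw [mul_rpow (by positivity) hx, ← exp_mul] at hpow
  calc x ^ b = (b / c) ^ b * ((c / b) ^ b * x ^ b) := by
        rw [← mul_assoc, ← mul_rpow (by positivity) (by positivity),
          div_mul_div_cancel₀ hc.ne', div_self hb.ne', one_rpow, one_mul]
    _ ≤ (b / c) ^ b * exp ((c / b * x - 1) * b) := by gcongr
    _ = (b / c) ^ b * exp (c * x - b) := by congr 2; field_simp

lemma exists_one_add_rpow_le_mul_exp_rpow {p a c : ℝ} (hp : 0 < p) (hp1 : p ≤ 1) (ha : 0 < a)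
    (hc : 0 < c) : ∃ C > 0, ∀ t : ℝ, 0 ≤ t → (1 + t) ^ a ≤ C * exp (c * t ^ p) := by
  refine ⟨(a / p / c) ^ (a / p) * exp (c - a / p), by positivity, fun t ht => ?_⟩
  calc (1 + t) ^ a = ((1 + t) ^ p) ^ (a / p) := by
        rw [← rpow_mul (by linarith), mul_div_cancel₀ _ hp.ne']
    _ ≤ (1 + t ^ p) ^ (a / p) := by
        gcongr
        simpa using rpow_add_le_add_rpow zero_le_one ht hp.le hp1
    _ ≤ (a / p / c) ^ (a / p) * exp (c * (1 + t ^ p) - a / p) :=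
        rpow_le_mul_exp (by positivity) (by positivity) hc
    _ = (a / p / c) ^ (a / p) * exp (c - a / p) * exp (c * t ^ p) := by
        rw [mul_assoc, ← exp_add]; ring_nf

lemma intervalIntegrable_exp_mul_one_add_rpow {p lam mu t a b : ℝ} (hp : 0 ≤ p) (ha : 0 ≤ a)
    (hb : 0 ≤ b) :
    IntervalIntegrable (fun s => exp (-lam * (t ^ p - s ^ p)) * (1 + s) ^ (-mu)) volume a b := by
  refine ContinuousOn.intervalIntegrable fun s hs => ?_
  have hs₀ : 0 ≤ s := le_trans (le_min ha hb) hs.1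
  have : ContinuousAt (fun s : ℝ => s ^ p) s := continuousAt_rpow_const _ _ (Or.inr hp)
  have : ContinuousAt (fun s : ℝ => (1 + s) ^ (-mu)) s :=
    ContinuousAt.rpow_const (f := fun s => 1 + s) (by fun_prop) (Or.inl (by linarith))
  fun_prop

lemma exp_neg_mul_sub_rpow_le_of_le_half {p lam s t : ℝ} (hp : 0 ≤ p) (hlam : 0 ≤ lam)
    (hs : 0 ≤ s) (hst : s ≤ t / 2) :
    exp (-lam * (t ^ p - s ^ p)) ≤ exp (-(lam * (1 - 2 ^ (-p))) * t ^ p) := by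
  have hsp : s ^ p ≤ 2 ^ (-p) * t ^ p :=
    calc s ^ p ≤ (t / 2) ^ p := rpow_le_rpow hs hst hp
      _ = 2 ^ (-p) * t ^ p := by
        rw [div_rpow (by linarith) zero_le_two, rpow_neg zero_le_two, div_eq_inv_mul]
  exact exp_le_exp.2 (by nlinarith)

lemma integral_initial_half_le {p lam mu t : ℝ} (hp : 0 ≤ p) (hlam : 0 ≤ lam) (hmu : 0 ≤ mu)
    (ht : 0 ≤ t) :
    ∫ s in (0:ℝ)..t / 2, exp (-lam * (t ^ p - s ^ p)) * (1 + s) ^ (-mu)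
      ≤ t / 2 * exp (-(lam * (1 - 2 ^ (-p))) * t ^ p) := by
  have hbound : ∀ s ∈ Set.Icc 0 (t / 2),
      exp (-lam * (t ^ p - s ^ p)) * (1 + s) ^ (-mu) ≤ exp (-(lam * (1 - 2 ^ (-p))) * t ^ p) :=
    fun s ⟨hs, hst⟩ =>
      calc exp (-lam * (t ^ p - s ^ p)) * (1 + s) ^ (-mu)
          ≤ exp (-lam * (t ^ p - s ^ p)) * 1 := by
            gcongr
            exact rpow_le_one_of_one_le_of_nonpos (by linarith) (by linarith)
        _ ≤ _ := (mul_one _).trans_le (exp_neg_mul_sub_rpow_le_of_le_half hp hlam hs hst)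
  calc _ ≤ ∫ _ in (0:ℝ)..t / 2, exp (-(lam * (1 - 2 ^ (-p))) * t ^ p) :=
        intervalIntegral.integral_mono_on (by linarith)
          (intervalIntegrable_exp_mul_one_add_rpow hp le_rfl (by linarith))
          intervalIntegrable_const hbound
    _ = _ := by simp

lemma exists_integral_initial_half_le {p lam mu : ℝ} (hp : 0 < p) (hp1 : p ≤ 1) (hlam : 0 < lam)
    (hmu : 0 ≤ mu) :
    ∃ C > 0, ∀ t : ℝ, 0 ≤ t →
      ∫ s in (0:ℝ)..t / 2, exp (-lam * (t ^ p - s ^ p)) * (1 + s) ^ (-mu)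
        ≤ C * (1 + t) ^ (-mu) := by
  set c := lam * (1 - 2 ^ (-p))
  have hc : 0 < c :=
    mul_pos hlam (sub_pos.2 (rpow_lt_one_of_one_lt_of_neg one_lt_two (by linarith)))
  obtain ⟨C, hC, hgrowth⟩ :=
    exists_one_add_rpow_le_mul_exp_rpow hp hp1 (by linarith : 0 < mu + 1) hc
  refine ⟨C, hC, fun t ht => (integral_initial_half_le hp.le hlam.le hmu ht).trans ?_⟩
  have h1t : 0 < 1 + t := by linarith
  rw [neg_mul, exp_neg, ← div_eq_mul_inv, div_le_iff₀ (exp_pos _)]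
  calc t / 2 ≤ (1 + t) ^ (mu + 1) * (1 + t) ^ (-mu) := by
        rw [← rpow_add h1t, show mu + 1 + -mu = 1 by ring, rpow_one]; linarith
    _ ≤ C * exp (c * t ^ p) * (1 + t) ^ (-mu) := by gcongr; exact hgrowth t ht
    _ = C * (1 + t) ^ (-mu) * exp (c * t ^ p) := by ring

lemma intervalIntegrable_exp_neg_mul_sub_rpow_mul_deriv {p lam a t : ℝ} (ha : 0 < a)
    (hat : a ≤ t) :
    IntervalIntegrable (fun s => exp (-lam * (t ^ p - s ^ p)) * (lam * (p * s ^ (p - 1))))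
      volume a t := by
  refine ContinuousOn.intervalIntegrable fun s hs => ContinuousAt.continuousWithinAt ?_
  have hs₀ : s ≠ 0 := (ha.trans_le (Set.uIcc_of_le hat ▸ hs).1).ne'
  have : ContinuousAt (fun s : ℝ => s ^ p) s := continuousAt_rpow_const _ _ (Or.inl hs₀)
  have : ContinuousAt (fun s : ℝ => s ^ (p - 1)) s := continuousAt_rpow_const _ _ (Or.inl hs₀)
  fun_prop

lemma integral_exp_neg_mul_sub_rpow_mul_deriv {p lam a t : ℝ} (ha : 0 < a) (hat : a ≤ t) :
    ∫ s in a..t, exp (-lam * (t ^ p - s ^ p)) * (lam * (p * s ^ (p - 1)))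
      = 1 - exp (-lam * (t ^ p - a ^ p)) := by
  have hderiv : ∀ s ∈ Set.uIcc a t, HasDerivAt (fun s => exp (-lam * (t ^ p - s ^ p)))
      (exp (-lam * (t ^ p - s ^ p)) * (lam * (p * s ^ (p - 1)))) s := by
    intro s hs
    have hs₀ : s ≠ 0 := (ha.trans_le (Set.uIcc_of_le hat ▸ hs).1).ne'
    have := (((hasDerivAt_rpow_const (p := p) (Or.inl hs₀)).const_sub (t ^ p)).const_mul
      (-lam)).exp
    convert this using 1; ring
  rw [intervalIntegral.integral_eq_sub_of_hasDerivAt hderiv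
    (intervalIntegrable_exp_neg_mul_sub_rpow_mul_deriv ha hat)]
  simp

lemma integral_exp_neg_mul_sub_rpow_le {p lam a t : ℝ} (hp : 0 < p) (hp1 : p ≤ 1)
    (hlam : 0 < lam) (ha : 0 < a) (hat : a ≤ t) :
    ∫ s in a..t, exp (-lam * (t ^ p - s ^ p)) ≤ t ^ (1 - p) / (lam * p) := by
  have hbound : ∀ s ∈ Set.Icc a t, exp (-lam * (t ^ p - s ^ p))
      ≤ t ^ (1 - p) / (lam * p) * (exp (-lam * (t ^ p - s ^ p)) * (lam * (p * s ^ (p - 1)))) := by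
    rintro s ⟨has, hst⟩
    have hs : 0 < s := ha.trans_le has
    have h1 : t ^ (p - 1) ≤ s ^ (p - 1) := rpow_le_rpow_of_nonpos hs hst (by linarith)
    have h2 : t ^ (1 - p) * t ^ (p - 1) = 1 := by
      rw [← rpow_add (hs.trans_le hst)]; norm_num
    have h3 : 1 ≤ t ^ (1 - p) * s ^ (p - 1) :=
      h2.symm.le.trans (mul_le_mul_of_nonneg_left h1 (rpow_nonneg (hs.le.trans hst) _))
    calc exp (-lam * (t ^ p - s ^ p))
        ≤ exp (-lam * (t ^ p - s ^ p)) * (t ^ (1 - p) * s ^ (p - 1)) :=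
          le_mul_of_one_le_right (exp_pos _).le h3
      _ = _ := by field_simp
  have hexp : Continuous fun s : ℝ => exp (-lam * (t ^ p - s ^ p)) := by
    have := continuous_rpow_const hp.le
    fun_prop
  calc ∫ s in a..t, exp (-lam * (t ^ p - s ^ p))
      ≤ ∫ s in a..t, t ^ (1 - p) / (lam * p) *
          (exp (-lam * (t ^ p - s ^ p)) * (lam * (p * s ^ (p - 1)))) :=
        intervalIntegral.integral_mono_on hat (hexp.intervalIntegrable _ _)
          ((intervalIntegrable_exp_neg_mul_sub_rpow_mul_deriv ha hat).const_mul _) hbound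
    _ = t ^ (1 - p) / (lam * p) * (1 - exp (-lam * (t ^ p - a ^ p))) := by
        rw [intervalIntegral.integral_const_mul, integral_exp_neg_mul_sub_rpow_mul_deriv ha hat]
    _ ≤ t ^ (1 - p) / (lam * p) :=
        mul_le_of_le_one_right (div_nonneg (rpow_nonneg (ha.le.trans hat) _) (by positivity))
          (by linarith [exp_pos (-lam * (t ^ p - a ^ p))])

lemma one_add_rpow_neg_le_of_half_le {mu s t : ℝ} (hmu : 0 ≤ mu) (ht : 0 ≤ t)
    (hts : t / 2 ≤ s) :
    (1 + s) ^ (-mu) ≤ 2 ^ mu * (1 + t) ^ (-mu) :=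
  calc (1 + s) ^ (-mu) ≤ ((1 + t) / 2) ^ (-mu) :=
        rpow_le_rpow_of_nonpos (by linarith) (by linarith) (by linarith)
    _ = 2 ^ mu * (1 + t) ^ (-mu) := by
        rw [div_rpow (by linarith) zero_le_two, rpow_neg zero_le_two, div_inv_eq_mul, mul_comm]

lemma integral_final_half_le {p lam mu t : ℝ} (hp : 0 < p) (hp1 : p ≤ 1) (hlam : 0 < lam)
    (hmu : 0 ≤ mu) (ht : 0 < t) :
    ∫ s in t / 2..t, exp (-lam * (t ^ p - s ^ p)) * (1 + s) ^ (-mu)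
      ≤ 2 ^ mu / (lam * p) * t ^ (1 - p) * (1 + t) ^ (-mu) := by
  have hexp : Continuous fun s : ℝ => exp (-lam * (t ^ p - s ^ p)) := by
    have := continuous_rpow_const hp.le
    fun_prop
  calc ∫ s in t / 2..t, exp (-lam * (t ^ p - s ^ p)) * (1 + s) ^ (-mu)
      ≤ ∫ s in t / 2..t, exp (-lam * (t ^ p - s ^ p)) * (2 ^ mu * (1 + t) ^ (-mu)) :=
        intervalIntegral.integral_mono_on (by linarith)
          (intervalIntegrable_exp_mul_one_add_rpow hp.le (by linarith) ht.le)
          ((hexp.intervalIntegrable _ _).mul_const _) fun s hs => by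
            gcongr; exact one_add_rpow_neg_le_of_half_le hmu ht.le hs.1
    _ = (∫ s in t / 2..t, exp (-lam * (t ^ p - s ^ p))) * (2 ^ mu * (1 + t) ^ (-mu)) :=
        intervalIntegral.integral_mul_const _ _
    _ ≤ t ^ (1 - p) / (lam * p) * (2 ^ mu * (1 + t) ^ (-mu)) := by
        gcongr
        exact integral_exp_neg_mul_sub_rpow_le hp hp1 hlam (by linarith) (by linarith)
    _ = 2 ^ mu / (lam * p) * t ^ (1 - p) * (1 + t) ^ (-mu) := by ring

theorem basic_decay (p lam mu : ℝ) (hp : 0 < p) (hp1 : p ≤ 1) (hlam : 0 < lam)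
    (hmu : 0 ≤ mu) :
    ∃ C : ℝ, 0 < C ∧ ∀ t : ℝ, 0 ≤ t →
      (∫ s in (0:ℝ)..t, Real.exp (-lam * (t ^ p - s ^ p)) * (1 + s) ^ (-mu))
        ≤ C * (1 + t) ^ (1 - p) * (1 + t) ^ (-mu) := by
  obtain ⟨C₀, hC₀, hinitial⟩ := exists_integral_initial_half_le hp hp1 hlam hmu
  refine ⟨C₀ + 2 ^ mu / (lam * p), by positivity, fun t ht => ?_⟩
  rcases ht.eq_or_lt with rfl | ht₀
  · simp only [intervalIntegral.integral_same]
    positivity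
  have h1 : 1 ≤ (1 + t) ^ (1 - p) := one_le_rpow (by linarith) (by linarith)
  have h2 : t ^ (1 - p) ≤ (1 + t) ^ (1 - p) := rpow_le_rpow ht (by linarith) (by linarith)
  rw [← intervalIntegral.integral_add_adjacent_intervals (b := t / 2)
    (intervalIntegrable_exp_mul_one_add_rpow hp.le le_rfl (by linarith))
    (intervalIntegrable_exp_mul_one_add_rpow hp.le (by linarith) ht)]
  calc _ ≤ C₀ * (1 + t) ^ (-mu) + 2 ^ mu / (lam * p) * t ^ (1 - p) * (1 + t) ^ (-mu) :=
        add_le_add (hinitial t ht) (integral_final_half_le hp hp1 hlam hmu ht₀)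
    _ ≤ C₀ * (1 + t) ^ (1 - p) * (1 + t) ^ (-mu)
          + 2 ^ mu / (lam * p) * (1 + t) ^ (1 - p) * (1 + t) ^ (-mu) := by
        gcongr
        exact le_mul_of_one_le_right hC₀.le h1
    _ = (C₀ + 2 ^ mu / (lam * p)) * (1 + t) ^ (1 - p) * (1 + t) ^ (-mu) := by ring
end

section
/- For 0 < p ≤ 1, λ > 0 and μ ≥ 0, there is a constant C (depending only on λ, μ, p) such that for all t ≥ 0, ∫₀ᵗ s^{p-1} e^{-λ(t^p - s^p)} (1+s)^{-μ} ds ≤ C (1+t)^{-μ}. -/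
/-!
Split the integral at `s = t / 2`. For `s ≤ t / 2` we have
`t ^ p - s ^ p ≥ (1 - 2 ^ (-p)) t ^ p`, so half of the exponential factor is at most
`exp (-c t ^ p)` with `c = (λ / 2) (1 - 2 ^ (-p))`, which beats any power of `1 + t`;
for `s ≥ t / 2` the weight `(1 + s) ^ (-μ)` is at most `2 ^ μ (1 + t) ^ (-μ)`. In both cases
the remaining `s ^ (p - 1) exp (-(λ / 2) (t ^ p - s ^ p))` is an exact derivative in `s`
and integrates to at most `2 / (λ p)`.
-/

open Real MeasureTheory

namespace Real

theorem mul_exp_neg_le_one (y : ℝ) : y * exp (-y) ≤ 1 :=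
  calc y * exp (-y) ≤ exp y * exp (-y) := by
        gcongr; linarith [add_one_le_exp y]
    _ = 1 := by rw [← exp_add, add_neg_cancel, exp_zero]

theorem rpow_mul_exp_neg_mul_le {a c x : ℝ} (ha : 0 ≤ a) (hc : 0 < c) (hx : 0 ≤ x) :
    x ^ a * exp (-(c * x)) ≤ (a / c) ^ a := by
  rcases ha.eq_or_lt with rfl | ha
  · simpa using mul_nonneg hc.le hx
  have hbase : x * exp (-(c / a * x)) ≤ a / c :=
    calc x * exp (-(c / a * x)) = a / c * (c / a * x * exp (-(c / a * x))) := by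
          field_simp
      _ ≤ a / c * 1 := by gcongr; exact mul_exp_neg_le_one _
      _ = a / c := mul_one _
  calc x ^ a * exp (-(c * x)) = (x * exp (-(c / a * x))) ^ a := by
        rw [mul_rpow hx (exp_pos _).le, ← exp_mul]
        field_simp
    _ ≤ (a / c) ^ a := by gcongr

theorem rpow_mul_exp_neg_mul_rpow_le {p c mu t : ℝ} (hp : 0 < p) (hc : 0 < c)
    (hmu : 0 ≤ mu) (ht : 0 ≤ t) : t ^ mu * exp (-(c * t ^ p)) ≤ (mu / p / c) ^ (mu / p) := by
  have hpow : t ^ mu = (t ^ p) ^ (mu / p) := by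
    rw [← rpow_mul ht, mul_div_cancel₀ _ hp.ne']
  rw [hpow]
  exact rpow_mul_exp_neg_mul_le (by positivity) hc (by positivity)

theorem exists_exp_neg_mul_rpow_le_mul_one_add_rpow_neg {p c mu : ℝ} (hp : 0 < p)
    (hc : 0 < c) (hmu : 0 ≤ mu) :
    ∃ K, 0 ≤ K ∧ ∀ t, 0 ≤ t → exp (-(c * t ^ p)) ≤ K * (1 + t) ^ (-mu) := by
  set B := max 1 ((mu / p / c) ^ (mu / p))
  refine ⟨2 ^ mu * B, by positivity, fun t ht => ?_⟩
  have hexp : exp (-(c * t ^ p)) ≤ 1 := exp_le_one_iff.mpr (neg_nonpos.mpr (by positivity))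
  have h1t : 0 < 1 + t := by linarith
  have hbound : (1 + t) ^ mu * exp (-(c * t ^ p)) ≤ 2 ^ mu * B := by
    rcases le_total t 1 with ht1 | ht1
    · calc (1 + t) ^ mu * exp (-(c * t ^ p)) ≤ 2 ^ mu * 1 := by
            gcongr ?_ * ?_
            exact rpow_le_rpow h1t.le (by linarith) hmu
        _ ≤ 2 ^ mu * B := by gcongr; exact le_max_left _ _
    · calc (1 + t) ^ mu * exp (-(c * t ^ p)) ≤ (2 * t) ^ mu * exp (-(c * t ^ p)) := by
            gcongr; linarith
        _ = 2 ^ mu * (t ^ mu * exp (-(c * t ^ p))) := by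
            rw [mul_rpow zero_le_two ht, mul_assoc]
        _ ≤ 2 ^ mu * B := by
            gcongr
            exact (rpow_mul_exp_neg_mul_rpow_le hp hc hmu ht).trans (le_max_right _ _)
  calc exp (-(c * t ^ p)) = (1 + t) ^ mu * exp (-(c * t ^ p)) * (1 + t) ^ (-mu) := by
        rw [mul_comm _ (exp _), mul_assoc, ← rpow_add h1t, add_neg_cancel, rpow_zero, mul_one]
    _ ≤ 2 ^ mu * B * (1 + t) ^ (-mu) := by gcongr

theorem one_sub_two_rpow_neg_mul_le_sub_rpow {p s t : ℝ} (hp : 0 ≤ p) (hs : 0 ≤ s)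
    (hst : s ≤ t / 2) : (1 - 2 ^ (-p)) * t ^ p ≤ t ^ p - s ^ p := by
  have ht : 0 ≤ t := by linarith
  have : s ^ p ≤ 2 ^ (-p) * t ^ p :=
    calc s ^ p ≤ (t / 2) ^ p := rpow_le_rpow hs hst hp
      _ = 2 ^ (-p) * t ^ p := by
        rw [div_rpow ht zero_le_two, rpow_neg zero_le_two, div_eq_inv_mul]
  linarith

theorem one_add_rpow_neg_le_of_half_le {mu s t : ℝ} (hmu : 0 ≤ mu) (ht : 0 ≤ t)
    (hst : t / 2 ≤ s) : (1 + s) ^ (-mu) ≤ 2 ^ mu * (1 + t) ^ (-mu) :=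
  calc (1 + s) ^ (-mu) ≤ ((1 + t) / 2) ^ (-mu) :=
        rpow_le_rpow_of_nonpos (by positivity) (by linarith) (by linarith)
    _ = 2 ^ mu * (1 + t) ^ (-mu) := by
        rw [div_rpow (by positivity) zero_le_two, rpow_neg zero_le_two mu, div_inv_eq_mul,
          mul_comm]

theorem exp_neg_mul_sub_rpow_mul_one_add_rpow_neg_le {p lam mu s t : ℝ} (hp : 0 ≤ p)
    (hlam : 0 ≤ lam) (hmu : 0 ≤ mu) (hs : 0 ≤ s) (hst : s ≤ t) :
    exp (-lam * (t ^ p - s ^ p)) * (1 + s) ^ (-mu) ≤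
      (exp (-(lam / 2 * (1 - 2 ^ (-p)) * t ^ p)) + 2 ^ mu * (1 + t) ^ (-mu)) *
        exp (-(lam / 2) * (t ^ p - s ^ p)) := by
  have ht : 0 ≤ t := hs.trans hst
  have hsp : 0 ≤ t ^ p - s ^ p := sub_nonneg.mpr (rpow_le_rpow hs hst hp)
  have hhalf : exp (-lam * (t ^ p - s ^ p)) =
      exp (-(lam / 2) * (t ^ p - s ^ p)) * exp (-(lam / 2) * (t ^ p - s ^ p)) := by
    rw [← exp_add]; ring_nf
  rcases le_total s (t / 2) with hs2 | hs2
  · have hfar : exp (-(lam / 2) * (t ^ p - s ^ p)) ≤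
        exp (-(lam / 2 * (1 - 2 ^ (-p)) * t ^ p)) := by
      rw [exp_le_exp, mul_assoc, neg_mul]
      gcongr
      exact one_sub_two_rpow_neg_mul_le_sub_rpow hp hs hs2
    calc exp (-lam * (t ^ p - s ^ p)) * (1 + s) ^ (-mu)
        ≤ exp (-lam * (t ^ p - s ^ p)) * 1 := by
          gcongr; exact rpow_le_one_of_one_le_of_nonpos (by linarith) (by linarith)
      _ ≤ exp (-(lam / 2 * (1 - 2 ^ (-p)) * t ^ p)) * exp (-(lam / 2) * (t ^ p - s ^ p)) := by
          rw [mul_one, hhalf]; gcongr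
      _ ≤ _ := by gcongr; exact le_add_of_nonneg_right (by positivity)
  · calc exp (-lam * (t ^ p - s ^ p)) * (1 + s) ^ (-mu)
        ≤ exp (-(lam / 2) * (t ^ p - s ^ p)) * (2 ^ mu * (1 + t) ^ (-mu)) := by
          gcongr
          · nlinarith
          · exact one_add_rpow_neg_le_of_half_le hmu ht hs2
      _ ≤ _ := by rw [mul_comm]; gcongr; exact le_add_of_nonneg_left (exp_pos _).le

theorem intervalIntegrable_rpow_sub_one_mul {p t : ℝ} (hp : 0 < p) {g : ℝ → ℝ}
    (hg : ContinuousOn g (Set.uIcc 0 t)) :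
    IntervalIntegrable (fun s => s ^ (p - 1) * g s) volume 0 t :=
  (intervalIntegral.intervalIntegrable_rpow' (by linarith)).mul_continuousOn hg

theorem integral_rpow_sub_one_mul_exp_neg_mul_sub_rpow {p lam t : ℝ} (hp : 0 < p)
    (hlam : lam ≠ 0) (ht : 0 ≤ t) :
    ∫ s in (0 : ℝ)..t, s ^ (p - 1) * exp (-lam * (t ^ p - s ^ p)) =
      (1 - exp (-lam * t ^ p)) / (lam * p) := by
  have hcont : Continuous fun s : ℝ => exp (-lam * (t ^ p - s ^ p)) := by
    have := continuous_rpow_const hp.le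
    fun_prop
  have hderiv : ∀ s ∈ Set.Ioo 0 t,
      HasDerivAt (fun s => exp (-lam * (t ^ p - s ^ p)) / (lam * p))
        (s ^ (p - 1) * exp (-lam * (t ^ p - s ^ p))) s := by
    intro s hs
    have := (((hasDerivAt_rpow_const (p := p) (Or.inl hs.1.ne')).const_sub (t ^ p)).const_mul
      (-lam)).exp.div_const (lam * p)
    refine this.congr_deriv ?_
    field_simp [hp.ne']
  rw [intervalIntegral.integral_eq_sub_of_hasDerivAt_of_le ht (hcont.div_const _).continuousOn
    hderiv (intervalIntegrable_rpow_sub_one_mul hp hcont.continuousOn)]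
  rw [sub_self, mul_zero, exp_zero, zero_rpow hp.ne', sub_zero]
  ring

theorem integral_rpow_sub_one_mul_exp_neg_mul_sub_rpow_le {p lam t : ℝ} (hp : 0 < p)
    (hlam : 0 < lam) (ht : 0 ≤ t) :
    ∫ s in (0 : ℝ)..t, s ^ (p - 1) * exp (-lam * (t ^ p - s ^ p)) ≤ 1 / (lam * p) := by
  rw [integral_rpow_sub_one_mul_exp_neg_mul_sub_rpow hp hlam.ne' ht]
  gcongr
  linarith [exp_pos (-lam * t ^ p)]

theorem integral_rpow_sub_one_mul_exp_neg_mul_sub_rpow_mul_one_add_rpow_neg_le {p lam mu t : ℝ}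
    (hp : 0 < p) (hlam : 0 < lam) (hmu : 0 ≤ mu) (ht : 0 ≤ t) :
    ∫ s in (0 : ℝ)..t, s ^ (p - 1) * exp (-lam * (t ^ p - s ^ p)) * (1 + s) ^ (-mu) ≤
      (exp (-(lam / 2 * (1 - 2 ^ (-p)) * t ^ p)) + 2 ^ mu * (1 + t) ^ (-mu)) / (lam / 2 * p) := by
  set M := exp (-(lam / 2 * (1 - 2 ^ (-p)) * t ^ p)) + 2 ^ mu * (1 + t) ^ (-mu)
  have hrpow := continuous_rpow_const hp.le
  have hf : IntervalIntegrable
      (fun s => s ^ (p - 1) * exp (-lam * (t ^ p - s ^ p)) * (1 + s) ^ (-mu)) volume 0 t := by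
    have hshift : ContinuousOn (fun s : ℝ => (1 + s) ^ (-mu)) (Set.uIcc 0 t) :=
      ContinuousOn.rpow_const (by fun_prop) fun s hs =>
        Or.inl (by rw [Set.uIcc_of_le ht] at hs; linarith [hs.1])
    have hexp : Continuous fun s : ℝ => exp (-lam * (t ^ p - s ^ p)) := by fun_prop
    simpa only [mul_assoc] using intervalIntegrable_rpow_sub_one_mul hp
      (hexp.continuousOn.fun_mul hshift)
  have hg : IntervalIntegrable
      (fun s => s ^ (p - 1) * exp (-(lam / 2) * (t ^ p - s ^ p))) volume 0 t :=
    intervalIntegrable_rpow_sub_one_mul hp (Continuous.continuousOn (by fun_prop))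
  calc (∫ s in (0 : ℝ)..t, s ^ (p - 1) * exp (-lam * (t ^ p - s ^ p)) * (1 + s) ^ (-mu))
      ≤ ∫ s in (0 : ℝ)..t, M * (s ^ (p - 1) * exp (-(lam / 2) * (t ^ p - s ^ p))) := by
        refine intervalIntegral.integral_mono_on ht hf (hg.const_mul M) fun s ⟨hs0, hst⟩ => ?_
        rw [mul_assoc, mul_left_comm M]
        exact mul_le_mul_of_nonneg_left
          (exp_neg_mul_sub_rpow_mul_one_add_rpow_neg_le hp.le hlam.le hmu hs0 hst)
          (rpow_nonneg hs0 _)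
    _ = M * ∫ s in (0 : ℝ)..t, s ^ (p - 1) * exp (-(lam / 2) * (t ^ p - s ^ p)) :=
        intervalIntegral.integral_const_mul _ _
    _ ≤ M * (1 / (lam / 2 * p)) := by
        gcongr
        exact integral_rpow_sub_one_mul_exp_neg_mul_sub_rpow_le hp (half_pos hlam) ht
    _ = M / (lam / 2 * p) := mul_one_div _ _

end Real

theorem basic_decay_cor_general (p lam mu : ℝ) (hp : 0 < p) (hlam : 0 < lam)
    (hmu : 0 ≤ mu) :
    ∃ C : ℝ, 0 < C ∧ ∀ t : ℝ, 0 ≤ t →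
      (∫ s in (0:ℝ)..t, s ^ (p - 1) * Real.exp (-lam * (t ^ p - s ^ p)) * (1 + s) ^ (-mu))
        ≤ C * (1 + t) ^ (-mu) := by
  have hc : 0 < lam / 2 * (1 - 2 ^ (-p)) :=
    mul_pos (half_pos hlam)
      (sub_pos.mpr (rpow_lt_one_of_one_lt_of_neg one_lt_two (neg_neg_of_pos hp)))
  obtain ⟨K, hK, hdecay⟩ := exists_exp_neg_mul_rpow_le_mul_one_add_rpow_neg hp hc hmu
  refine ⟨(K + 2 ^ mu) / (lam / 2 * p), by positivity, fun t ht => ?_⟩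
  calc _ ≤ (exp (-(lam / 2 * (1 - 2 ^ (-p)) * t ^ p)) + 2 ^ mu * (1 + t) ^ (-mu)) /
        (lam / 2 * p) :=
        integral_rpow_sub_one_mul_exp_neg_mul_sub_rpow_mul_one_add_rpow_neg_le hp hlam hmu ht
    _ ≤ (K * (1 + t) ^ (-mu) + 2 ^ mu * (1 + t) ^ (-mu)) / (lam / 2 * p) := by
        gcongr
        exact hdecay t ht
    _ = (K + 2 ^ mu) / (lam / 2 * p) * (1 + t) ^ (-mu) := by ring

theorem basic_decay_cor (p lam mu : ℝ) (hp : 0 < p) (hp1 : p ≤ 1) (hlam : 0 < lam)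
    (hmu : 0 ≤ mu) :
    ∃ C : ℝ, 0 < C ∧ ∀ t : ℝ, 0 ≤ t →
      (∫ s in (0:ℝ)..t, s ^ (p - 1) * Real.exp (-lam * (t ^ p - s ^ p)) * (1 + s) ^ (-mu))
        ≤ C * (1 + t) ^ (-mu) :=
  basic_decay_cor_general p lam mu hp hlam hmu
end
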